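/- In a monomial algebra Λ there exists no overlap between any two co-elementary perfect paths. -/

import Mathlib

/-! Combinatorial model of a monomial algebra `Λ = KQ/I`.

A finite quiver is given by source and target maps on a type of arrows.
A (nontrivial) path is encoded as a nonempty list of composable arrows;
the admissible monomial ideal `I` is encoded by its set `F` of minimal
generating paths, and a path is zero in `Λ` iff it contains a member of
`F` as a contiguous subpath (infix). -/

/-- A quiver structure on arrow type `E` with vertex type `V`. -/
structure QuiverData (V E : Type) where
  src : E → V
  tgt : E → V

namespace QuiverData

variable {V E : Type} (Q : QuiverData V E)

/-- `l` is the list of arrows of a path of `Q`. -/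
def IsPath (l : List E) : Prop := l.Chain' fun a b => Q.tgt a = Q.src b

/-- Two paths are composable: the target of the first equals the source of
the second (vacuously true if one of them is trivial). -/
def Composable (l m : List E) : Prop :=
  ∀ a ∈ l.getLast?, ∀ b ∈ m.head?, Q.tgt a = Q.src b

end QuiverData

/-- A monomial algebra, encoded combinatorially: a finite quiver together with
the set `F` of minimal paths generating the admissible monomial ideal `I`. -/
structure MonomialData (V E : Type) extends QuiverData V E where
  F : Set (List E)
  F_path : ∀ f ∈ F, toQuiverData.IsPath f
  F_len : ∀ f ∈ F, 2 ≤ f.length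
  F_min : ∀ f ∈ F, ∀ g, g <:+: f → (∃ f' ∈ F, f' <:+: g) → g = f
  admissible : ∃ N, ∀ l, toQuiverData.IsPath l → N ≤ l.length → ∃ f ∈ F, f <:+: l

namespace MonomialData

variable {V E : Type} (M : MonomialData V E)

/-- The path `l` is zero in `Λ`. -/
def IsZero (l : List E) : Prop := ∃ f ∈ M.F, f <:+: l

/-- `l` is a path which is nonzero in `Λ`. -/
def Nonzero (l : List E) : Prop := M.toQuiverData.IsPath l ∧ ¬ M.IsZero l

/-- A perfect pair of nonzero nontrivial paths, after Chen–Shen–Zhou. -/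
def PerfectPair (p q : List E) : Prop :=
  p ≠ [] ∧ q ≠ [] ∧ M.Nonzero p ∧ M.Nonzero q ∧
  M.toQuiverData.Composable p q ∧ M.IsZero (p ++ q) ∧
  (∀ q', q' ≠ [] → M.Nonzero q' → M.toQuiverData.Composable p q' →
      M.IsZero (p ++ q') → q <+: q') ∧
  (∀ p', p' ≠ [] → M.Nonzero p' → M.toQuiverData.Composable p' q →
      M.IsZero (p' ++ q) → p <:+ p')

/-- A perfect path: a path appearing in a perfect path sequence
`(p₁, …, pₙ, pₙ₊₁ = p₁)`, encoded by a periodic sequence of paths each of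
whose consecutive pairs is perfect. -/
def IsPerfect (p : List E) : Prop :=
  ∃ (n : ℕ) (s : ℕ → List E), 0 < n ∧ s 0 = p ∧ (∀ i, s (i + n) = s i) ∧
    ∀ i, M.PerfectPair (s i) (s (i + 1))

/-- `c` is the underlying cycle associated with the perfect path `p`:
the shortest cycle `c` with `p₁ ⋯ pₙ = cˡ` for some `l > 0`, for a perfect
path sequence through `p`. -/
def IsUnderlyingCycleOf (c p : List E) : Prop :=
  ∃ (n : ℕ) (s : ℕ → List E), 0 < n ∧ s 0 = p ∧ (∀ i, s (i + n) = s i) ∧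
    (∀ i, M.PerfectPair (s i) (s (i + 1))) ∧
    (∃ l, 0 < l ∧ ((List.range n).map s).flatten = (List.replicate l c).flatten) ∧
    (∀ c' l', 0 < l' → ((List.range n).map s).flatten = (List.replicate l' c').flatten →
      c.length ≤ c'.length)


/-- There is an overlap between the perfect paths `p` and `q` (`p` overlaps `q`). -/
def Overlap (p q : List E) : Prop :=
  ∃ x p' q' : List E, x ≠ [] ∧ p = p' ++ x ∧ q = x ++ q' ∧
    M.Nonzero (p' ++ x ++ q') ∧ (p = q → p' ≠ [] ∧ q' ≠ [])

/-- An elementary perfect path: a source in the Hasse quiver of the left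
divisibility order `⪯` on perfect paths, i.e. it is not a proper left divisor
of any perfect path. -/
def Elementary (p : List E) : Prop :=
  M.IsPerfect p ∧ ¬ ∃ q, M.IsPerfect q ∧ p <+: q ∧ p ≠ q

/-- A co-elementary perfect path: a sink in the Hasse quiver of `⪯`, i.e.
no proper left divisor of it is perfect. -/
def CoElementary (p : List E) : Prop :=
  M.IsPerfect p ∧ ¬ ∃ q, M.IsPerfect q ∧ q <+: p ∧ q ≠ p

/-- There is an arrow `q ⟶ p` in the Hasse quiver of `(ℙ_Λ, ⪯)`:
`p ≺ q` and no perfect path lies strictly between them. -/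
def HasseArrowPrec (q p : List E) : Prop :=
  M.IsPerfect p ∧ M.IsPerfect q ∧ p <+: q ∧ p ≠ q ∧
    ¬ ∃ r, M.IsPerfect r ∧ p <+: r ∧ p ≠ r ∧ r <+: q ∧ r ≠ q

end MonomialData

/-- Two cycles are equivalent (agree up to cyclic permutation): each is a
subpath of a power of the other. -/
def CyclesEquiv {E : Type} (c d : List E) : Prop :=
  ∃ m k, 0 < m ∧ 0 < k ∧ c <:+: (List.replicate m d).flatten ∧
    d <:+: (List.replicate k c).flatten

/-! If `p = p'x` and `q = xq'` overlap with `p'` nontrivial, follow the perfect path sequences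
`(pₖ)` of `p` and `(qₖ)` of `q` along the nonzero path `p'xq'`. The minimality conditions of
perfect pairs force the two sequences to stay interleaved forever: `pₖ = aₖbₖ` and
`qₖ = bₖaₖ₊₁` with `bₖ` nontrivial. Since `|aₖ₊₁| - |aₖ| = |qₖ| - |pₖ|` is periodic and `aₖ` is
bounded, the `aₖ` are periodic, and then `a₀, b₀p₁, a₂, b₂p₃, …` is again a perfect path
sequence. So `a₀ = p'` is a perfect proper left divisor of `p`. If `p'` is trivial, `p` itself
is a proper left divisor of `q`. -/

open List

theorem periodic_of_periodic_sub_of_le {a c : ℕ → ℕ} {N : ℕ}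
    (hdiff : Function.Periodic (fun k => (a (k + 1) : ℤ) - a k) N)
    (hc : Function.Periodic c N) (hac : ∀ k, a k ≤ c k) : Function.Periodic a N := by
  set D : ℤ := a N - a 0
  have hshift : ∀ k, (a (k + N) : ℤ) - a k = D := by
    intro k
    induction k with
    | zero => simp [D]
    | succ k ih =>
      have := hdiff k
      simp only [show k + 1 + N = k + N + 1 by omega] at this ⊢
      linarith
  have hmul : ∀ j : ℕ, (a (j * N) : ℤ) = a 0 + j * D := by
    intro j
    induction j with
    | zero => simp
    | succ j ih =>
      have := hshift (j * N)
      rw [show (j + 1) * N = j * N + N by ring]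
      push_cast
      linarith
  have hbound : ∀ j : ℕ, (a (j * N) : ℤ) ≤ c 0 := fun j => by
    exact_mod_cast hc.nat_mul_eq j ▸ hac (j * N)
  have hD : D = 0 := by
    rcases lt_trichotomy D 0 with hneg | hzero | hpos
    · have := hmul (a 0 + 1)
      have := (a ((a 0 + 1) * N)).cast_nonneg (α := ℤ)
      push_cast at *
      nlinarith
    · exact hzero
    · have := hmul (c 0 + 1)
      have := hbound (c 0 + 1)
      have := (a 0).cast_nonneg (α := ℤ)
      push_cast at *
      nlinarith
  intro k
  have := hshift k
  omega

namespace QuiverData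

variable {V E : Type} {Q : QuiverData V E} {a b c l m : List E}

theorem isPath_append : Q.IsPath (a ++ b) ↔ Q.IsPath a ∧ Q.IsPath b ∧ Q.Composable a b :=
  isChain_append

theorem IsPath.infix (h : Q.IsPath l) (hm : m <:+: l) : Q.IsPath m :=
  IsChain.infix h hm

theorem composable_append_left (hb : b ≠ []) : Q.Composable (a ++ b) c ↔ Q.Composable b c := by
  simp only [Composable, getLast?_append_of_ne_nil _ hb]

theorem composable_append_right (hb : b ≠ []) : Q.Composable a (b ++ c) ↔ Q.Composable a b := by
  simp only [Composable, head?_append_of_ne_nil _ hb]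

end QuiverData

namespace MonomialData

open QuiverData

variable {V E : Type} {M : MonomialData V E} {a b f g l m : List E}

theorem IsZero.mono (h : M.IsZero l) (hl : l <:+: m) : M.IsZero m :=
  let ⟨f, hf, hfl⟩ := h
  ⟨f, hf, hfl.trans hl⟩

theorem Nonzero.infix (h : M.Nonzero m) (hl : l <:+: m) : M.Nonzero l :=
  ⟨h.1.infix hl, fun hz => h.2 (hz.mono hl)⟩

theorem isZero_of_mem (hf : f ∈ M.F) : M.IsZero f :=
  ⟨f, hf, infix_refl f⟩

theorem eq_of_infix_of_mem (hf : f ∈ M.F) (hg : g ∈ M.F) (h : g <:+: f) : g = f :=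
  M.F_min f hf g h ⟨g, hg, infix_refl g⟩

theorem nonzero_of_infix_of_mem (hf : f ∈ M.F) (hg : g <:+: f) (hlt : g.length < f.length) :
    M.Nonzero g :=
  ⟨(M.F_path f hf).infix hg, fun hz => hlt.ne (congrArg length (M.F_min f hf g hg hz))⟩

theorem CoElementary.not_isPerfect_of_append (h : M.CoElementary (a ++ b)) (hb : b ≠ []) :
    ¬ M.IsPerfect a := fun ha =>
  h.2 ⟨a, ha, prefix_append a b, fun he => hb (by simpa using congrArg length he)⟩

namespace PerfectPair

variable {p q : List E}

theorem left_ne_nil (h : M.PerfectPair p q) : p ≠ [] := h.1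

theorem right_ne_nil (h : M.PerfectPair p q) : q ≠ [] := h.2.1

theorem nonzero_left (h : M.PerfectPair p q) : M.Nonzero p := h.2.2.1

theorem nonzero_right (h : M.PerfectPair p q) : M.Nonzero q := h.2.2.2.1

theorem composable (h : M.PerfectPair p q) : M.Composable p q := h.2.2.2.2.1

theorem isZero_append (h : M.PerfectPair p q) : M.IsZero (p ++ q) := h.2.2.2.2.2.1

theorem prefix_of_isZero (h : M.PerfectPair p q) {q' : List E} (hq' : q' ≠ [])
    (hnz : M.Nonzero q') (hc : M.Composable p q') (hz : M.IsZero (p ++ q')) : q <+: q' :=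
  h.2.2.2.2.2.2.1 q' hq' hnz hc hz

theorem suffix_of_isZero (h : M.PerfectPair p q) {p' : List E} (hp' : p' ≠ [])
    (hnz : M.Nonzero p') (hc : M.Composable p' q) (hz : M.IsZero (p' ++ q)) : p <:+ p' :=
  h.2.2.2.2.2.2.2 p' hp' hnz hc hz

theorem append_mem (h : M.PerfectPair p q) : p ++ q ∈ M.F := by
  obtain ⟨f, hf, hfpq⟩ := h.isZero_append
  rcases infix_append_iff.1 hfpq with hfp | hfq | ⟨u, v, rfl, hup, hvq⟩
  · exact absurd ((isZero_of_mem hf).mono hfp) h.nonzero_left.2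
  · exact absurd ((isZero_of_mem hf).mono hfq) h.nonzero_right.2
  have hu : u ≠ [] := by
    rintro rfl
    exact h.nonzero_right.2 ((isZero_of_mem hf).mono hvq.isInfix)
  have hv : v ≠ [] := by
    rintro rfl
    rw [append_nil] at hf
    exact h.nonzero_left.2 ((isZero_of_mem hf).mono hup.isInfix)
  have hpu : p <:+ u := by
    obtain ⟨p₀, rfl⟩ := hup
    refine h.suffix_of_isZero hu (h.nonzero_left.infix (suffix_append _ _).isInfix)
      ((composable_append_left hu).1 h.composable) ((isZero_of_mem hf).mono ?_)
    exact infix_append_iff.2 (Or.inr (Or.inr ⟨u, v, rfl, suffix_refl u, hvq⟩))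
  have hqv : q <+: v := by
    obtain ⟨q₀, rfl⟩ := hvq
    refine h.prefix_of_isZero hv (h.nonzero_right.infix (prefix_append _ _).isInfix)
      ((composable_append_right hv).1 h.composable) ((isZero_of_mem hf).mono ?_)
    exact infix_append_iff.2 (Or.inr (Or.inr ⟨u, v, rfl, hup, prefix_refl v⟩))
  rwa [hup.eq_of_length (le_antisymm hup.length_le hpu.length_le),
    hvq.eq_of_length (le_antisymm hvq.length_le hqv.length_le)] at hf

end PerfectPair

structure PerfectPathSeq (M : MonomialData V E) where
  s : ℕ → List E
  n : ℕ
  n_pos : 0 < n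
  periodic : Function.Periodic s n
  perfectPair : ∀ i, M.PerfectPair (s i) (s (i + 1))

theorem IsPerfect.exists_perfectPathSeq (h : M.IsPerfect a) : ∃ c : M.PerfectPathSeq, c.s 0 = a :=
  let ⟨n, s, hn, h0, hper, hpair⟩ := h
  ⟨⟨s, n, hn, hper, hpair⟩, h0⟩

namespace PerfectPathSeq

variable (c : M.PerfectPathSeq) (i : ℕ)

theorem nonzero : M.Nonzero (c.s i) := (c.perfectPair i).nonzero_left

theorem ne_nil : c.s i ≠ [] := (c.perfectPair i).left_ne_nil

theorem append_mem : c.s i ++ c.s (i + 1) ∈ M.F := (c.perfectPair i).append_mem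

theorem periodic_mul_right (m : ℕ) : Function.Periodic c.s (c.n * m) :=
  mul_comm m c.n ▸ c.periodic.nat_mul m

end PerfectPathSeq

theorem isPerfect_of_alternating {f g : ℕ → List E} {n : ℕ} (hn : 0 < n)
    (hf : Function.Periodic f n) (hg : Function.Periodic g n)
    (hfg : ∀ i, M.PerfectPair (f i) (g i)) (hgf : ∀ i, M.PerfectPair (g i) (f (i + 1))) :
    M.IsPerfect (f 0) := by
  refine ⟨2 * n, fun i => if i % 2 = 0 then f (i / 2) else g (i / 2), by omega, rfl, ?_, ?_⟩
  · intro i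
    simp only [show (i + 2 * n) % 2 = i % 2 by omega, show (i + 2 * n) / 2 = i / 2 + n by omega,
      hf (i / 2), hg (i / 2)]
  · intro i
    rcases Nat.even_or_odd' i with ⟨k, rfl | rfl⟩
    · simpa [show (2 * k + 1) % 2 = 1 by omega, show (2 * k + 1) / 2 = k by omega] using hfg k
    · simpa [show (2 * k + 1) % 2 = 1 by omega, show (2 * k + 1) / 2 = k by omega,
        show (2 * k + 1 + 1) % 2 = 0 by omega, show (2 * k + 1 + 1) / 2 = k + 1 by omega]
        using hgf k

variable {P Q : M.PerfectPathSeq}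

theorem exists_interleaving_step {k : ℕ} {α β γ : List E} (hβ : β ≠ [])
    (hP : P.s k = α ++ β) (hQ : Q.s k = β ++ γ) (hU : M.Nonzero (P.s k ++ γ)) :
    ∃ δ ε, δ ≠ [] ∧ P.s (k + 1) = γ ++ δ ∧ Q.s (k + 1) = δ ++ ε ∧
      M.Nonzero (P.s (k + 1) ++ ε) := by
  have hQQ : Q.s k ++ Q.s (k + 1) = β ++ (γ ++ Q.s (k + 1)) := by rw [hQ, append_assoc]
  have hγQ : M.Nonzero (γ ++ Q.s (k + 1)) := by
    refine nonzero_of_infix_of_mem (Q.append_mem k) (hQQ ▸ (suffix_append _ _).isInfix) ?_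
    simp only [hQQ, length_append]
    have := length_pos_iff.2 hβ
    omega
  have hpre : P.s (k + 1) <+: γ ++ Q.s (k + 1) := by
    refine (P.perfectPair k).prefix_of_isZero (by simp [Q.ne_nil]) hγQ ?_ ?_
    · rw [hP, composable_append_left hβ]
      exact (isPath_append.1 (hQQ ▸ M.F_path _ (Q.append_mem k))).2.2
    · refine (isZero_of_mem (Q.append_mem k)).mono ?_
      rw [hQQ, hP, append_assoc]
      exact (suffix_append _ _).isInfix
  have hlen : γ.length < (P.s (k + 1)).length := by
    by_contra! hle
    have hPγ := (prefix_append_right_inj (P.s k)).2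
      (prefix_of_prefix_length_le hpre (prefix_append _ _) hle)
    exact hU.2 ((isZero_of_mem (P.append_mem k)).mono hPγ.isInfix)
  obtain ⟨δ, hδ⟩ := prefix_of_prefix_length_le (prefix_append _ _) hpre hlen.le
  obtain ⟨ε, hε⟩ : δ <+: Q.s (k + 1) := (prefix_append_right_inj γ).1 (hδ ▸ hpre)
  refine ⟨δ, ε, ?_, hδ.symm, hε.symm, ?_⟩
  · rintro rfl
    rw [append_nil] at hδ
    exact hU.2 (hδ ▸ isZero_of_mem (P.append_mem k))
  · rwa [← hδ, append_assoc, hε]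

/-- `P` and `Q` laid along one path: `Q.s k` starts after `A k` inside `P.s k` and ends after
`A (k + 1)` inside `P.s (k + 1)`. -/
structure Interleaving (P Q : M.PerfectPathSeq) where
  A : ℕ → List E
  B : ℕ → List E
  B_ne_nil : ∀ k, B k ≠ []
  P_eq : ∀ k, P.s k = A k ++ B k
  Q_eq : ∀ k, Q.s k = B k ++ A (k + 1)
  nonzero : ∀ k, M.Nonzero (P.s k ++ A (k + 1))

theorem exists_interleaving {α β γ : List E} (hβ : β ≠ []) (hP : P.s 0 = α ++ β)
    (hQ : Q.s 0 = β ++ γ) (hU : M.Nonzero (P.s 0 ++ γ)) :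
    ∃ I : Interleaving P Q, I.A 0 = α := by
  let Good (k : ℕ) (t : List E × List E × List E) : Prop :=
    t.2.1 ≠ [] ∧ P.s k = t.1 ++ t.2.1 ∧ Q.s k = t.2.1 ++ t.2.2 ∧ M.Nonzero (P.s k ++ t.2.2)
  have step : ∀ k t, Good k t → ∃ t', Good (k + 1) t' ∧ t'.1 = t.2.2 := by
    rintro k ⟨α, β, γ⟩ ⟨hβ, hP, hQ, hU⟩
    obtain ⟨δ, ε, hδ, hP', hQ', hU'⟩ := exists_interleaving_step hβ hP hQ hU
    exact ⟨(γ, δ, ε), ⟨hδ, hP', hQ', hU'⟩, rfl⟩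
  choose! next hnext using step
  let seq : ℕ → List E × List E × List E := fun k => Nat.rec (α, β, γ) next k
  have hseq : ∀ k, Good k (seq k) := by
    intro k
    induction k with
    | zero => exact ⟨hβ, hP, hQ, hU⟩
    | succ k ih => exact (hnext k _ ih).1
  have hlink : ∀ k, (seq (k + 1)).1 = (seq k).2.2 := fun k => (hnext k _ (hseq k)).2
  refine ⟨⟨fun k => (seq k).1, fun k => (seq k).2.1, fun k => (hseq k).1,
    fun k => (hseq k).2.1, fun k => ?_, fun k => ?_⟩, rfl⟩
  · simpa only [hlink] using (hseq k).2.2.1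
  · simpa only [hlink] using (hseq k).2.2.2

namespace Interleaving

variable (I : Interleaving P Q)

theorem length_A_succ (k : ℕ) :
    (I.A (k + 1)).length + (P.s k).length = (I.A k).length + (Q.s k).length := by
  rw [I.P_eq, I.Q_eq, length_append, length_append]
  omega

theorem periodic : Function.Periodic I.A (P.n * Q.n) ∧ Function.Periodic I.B (P.n * Q.n) := by
  have hP : Function.Periodic P.s (P.n * Q.n) := P.periodic_mul_right Q.n
  have hQ : Function.Periodic Q.s (P.n * Q.n) := Q.periodic.nat_mul P.n
  have hlen : Function.Periodic (fun k => (I.A k).length) (P.n * Q.n) := by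
    refine periodic_of_periodic_sub_of_le (c := fun k => (P.s k).length) (fun k => ?_)
      (fun k => by simp only [hP k]) (fun k => by simp [I.P_eq k])
    have h₁ := I.length_A_succ k
    have h₂ := I.length_A_succ (k + P.n * Q.n)
    rw [hP k, hQ k] at h₂
    simp only
    omega
  have hAB : ∀ k, I.A (k + P.n * Q.n) = I.A k ∧ I.B (k + P.n * Q.n) = I.B k := fun k =>
    append_inj (by rw [← I.P_eq, ← I.P_eq, hP k]) (hlen k)
  exact ⟨fun k => (hAB k).1, fun k => (hAB k).2⟩

theorem A_add_two_ne_nil {k : ℕ} (h : I.A k ≠ []) : I.A (k + 2) ≠ [] := by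
  intro h₀
  have hPP : P.s k ++ P.s (k + 1) = I.A k ++ (Q.s k ++ Q.s (k + 1)) := by
    rw [I.P_eq, I.P_eq, I.Q_eq, I.Q_eq, h₀]
    simp
  have hQP := eq_of_infix_of_mem (P.append_mem k) (Q.append_mem k)
    (hPP ▸ (suffix_append _ _).isInfix)
  have hlen := congrArg length hQP
  simp only [hPP, length_append] at hlen
  exact h (eq_nil_of_length_eq_zero (by omega))

theorem B_append_P_eq (j : ℕ) : I.B j ++ P.s (j + 1) = Q.s j ++ I.B (j + 1) := by
  rw [I.P_eq, I.Q_eq, append_assoc]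

theorem B_append_P_prefix (j : ℕ) : I.B j ++ P.s (j + 1) <+: Q.s j ++ Q.s (j + 1) := by
  rw [I.B_append_P_eq]
  exact (prefix_append_right_inj _).2 ⟨I.A (j + 2), (I.Q_eq (j + 1)).symm⟩

theorem isPath_B_append_P (j : ℕ) : M.IsPath (I.B j ++ P.s (j + 1)) :=
  (M.F_path _ (Q.append_mem j)).infix (I.B_append_P_prefix j).isInfix

theorem nonzero_B_append_P {j : ℕ} (h : I.A (j + 2) ≠ []) : M.Nonzero (I.B j ++ P.s (j + 1)) := by
  refine nonzero_of_infix_of_mem (Q.append_mem j) (I.B_append_P_prefix j).isInfix ?_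
  rw [I.B_append_P_eq, length_append, length_append, I.Q_eq (j + 1), length_append]
  exact Nat.add_lt_add_left (Nat.lt_add_of_pos_right (length_pos_iff.2 h)) _

theorem B_append_P_prefix_of_isZero {j : ℕ} (hA : I.A (j + 1) ≠ []) {u : List E} (hu : u ≠ [])
    (hnz : M.Nonzero u) (hc : M.Composable (I.A (j + 1)) u) (hz : M.IsZero (I.A (j + 1) ++ u)) :
    I.B (j + 1) ++ P.s (j + 2) <+: u := by
  obtain ⟨u₂, rfl⟩ : Q.s (j + 1) <+: u := by
    refine (Q.perfectPair j).prefix_of_isZero hu hnz ?_ (hz.mono ?_)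
    · rwa [I.Q_eq, composable_append_left hA]
    · rw [I.Q_eq, append_assoc]
      exact (suffix_append _ _).isInfix
  have hu₂ : u₂ ≠ [] := by
    rintro rfl
    apply (I.nonzero (j + 1)).2
    rwa [I.P_eq, append_assoc, ← I.Q_eq, ← append_nil (Q.s (j + 1))]
  have hsplit : Q.s (j + 1) ++ u₂ = I.B (j + 1) ++ (I.A (j + 2) ++ u₂) := by
    rw [I.Q_eq, append_assoc]
  have hP₂ : P.s (j + 2) <+: I.A (j + 2) ++ u₂ := by
    refine (P.perfectPair (j + 1)).prefix_of_isZero (by simp [hu₂]) (hnz.infix ?_) ?_ ?_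
    · rw [hsplit]
      exact (suffix_append _ _).isInfix
    · rw [I.P_eq, composable_append_left (I.B_ne_nil _)]
      exact (isPath_append.1 (hsplit ▸ hnz.1)).2.2
    · rwa [I.P_eq, append_assoc, ← hsplit]
  rw [I.P_eq (j + 2), prefix_append_right_inj] at hP₂
  rw [I.B_append_P_eq]
  exact (prefix_append_right_inj _).2 hP₂

theorem A_suffix_of_isZero {j : ℕ} {v : List E} (hv : v ≠ []) (hnz : M.Nonzero v)
    (hc : M.Composable v (I.B (j + 1) ++ P.s (j + 2)))
    (hz : M.IsZero (v ++ (I.B (j + 1) ++ P.s (j + 2)))) : I.A (j + 1) <:+ v := by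
  rw [composable_append_right (I.B_ne_nil _)] at hc
  by_cases hvB : M.IsZero (v ++ I.B (j + 1))
  · have hQ : Q.s j <:+ v := by
      refine (Q.perfectPair j).suffix_of_isZero hv hnz ?_ (hvB.mono ?_)
      · rwa [I.Q_eq, composable_append_right (I.B_ne_nil _)]
      · rw [I.Q_eq, ← append_assoc]
        exact (prefix_append _ _).isInfix
    exact (suffix_append _ _).trans (I.Q_eq j ▸ hQ)
  · have hB : M.IsPath (I.B (j + 1)) :=
      (Q.nonzero _).1.infix (I.Q_eq (j + 1) ▸ (prefix_append _ _).isInfix)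
    have hP : P.s (j + 1) <:+ v ++ I.B (j + 1) := by
      refine (P.perfectPair (j + 1)).suffix_of_isZero (by simp [hv])
        ⟨isPath_append.2 ⟨hnz.1, hB, hc⟩, hvB⟩ ?_ (by rwa [append_assoc])
      rw [composable_append_left (I.B_ne_nil _)]
      exact (isPath_append.1 (I.isPath_B_append_P (j + 1))).2.2
    rwa [I.P_eq, suffix_append_self_iff] at hP

theorem A_prefix_of_isZero {j : ℕ} {u : List E} (hu : u ≠ []) (hnz : M.Nonzero u)
    (hc : M.Composable (I.B j ++ P.s (j + 1)) u) (hz : M.IsZero (I.B j ++ P.s (j + 1) ++ u)) :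
    I.A (j + 2) <+: u := by
  rw [composable_append_left (P.ne_nil _)] at hc
  by_cases hBu : M.IsZero (I.B (j + 1) ++ u)
  · have hP : P.s (j + 2) <+: u := by
      refine (P.perfectPair (j + 1)).prefix_of_isZero hu hnz hc (hBu.mono ?_)
      rw [I.P_eq, append_assoc]
      exact (suffix_append _ _).isInfix
    exact (I.P_eq (j + 2) ▸ prefix_append _ _).trans hP
  · have hB : M.IsPath (I.B (j + 1)) :=
      (P.nonzero _).1.infix (I.P_eq (j + 1) ▸ (suffix_append _ _).isInfix)
    rw [I.P_eq, composable_append_left (I.B_ne_nil _)] at hc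
    have hQ : Q.s (j + 1) <+: I.B (j + 1) ++ u := by
      refine (Q.perfectPair j).prefix_of_isZero (by simp [hu])
        ⟨isPath_append.2 ⟨hB, hnz.1, hc⟩, hBu⟩ ?_ ?_
      · rw [composable_append_right (I.B_ne_nil _)]
        exact (isPath_append.1 (I.B_append_P_eq j ▸ I.isPath_B_append_P j)).2.2
      · rwa [← append_assoc, ← I.B_append_P_eq]
    rwa [I.Q_eq, prefix_append_right_inj] at hQ

theorem B_append_P_suffix_of_isZero {j : ℕ} (hA : I.A (j + 2) ≠ []) {v : List E} (hv : v ≠ [])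
    (hnz : M.Nonzero v) (hc : M.Composable v (I.A (j + 2))) (hz : M.IsZero (v ++ I.A (j + 2))) :
    I.B j ++ P.s (j + 1) <:+ v := by
  obtain ⟨v₃, rfl⟩ : P.s (j + 1) <:+ v := by
    refine (P.perfectPair (j + 1)).suffix_of_isZero hv hnz ?_ (hz.mono ?_)
    · rwa [I.P_eq, composable_append_right hA]
    · rw [I.P_eq, ← append_assoc]
      exact (prefix_append _ _).isInfix
  have hv₃ : v₃ ≠ [] := by
    rintro rfl
    exact (I.nonzero (j + 1)).2 (by simpa using hz)
  have hsplit : v₃ ++ P.s (j + 1) = v₃ ++ I.A (j + 1) ++ I.B (j + 1) := by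
    rw [I.P_eq, append_assoc]
  have hQ : Q.s j <:+ v₃ ++ I.A (j + 1) := by
    refine (Q.perfectPair j).suffix_of_isZero (by simp [hv₃])
      (hnz.infix (by rw [hsplit]; exact (prefix_append _ _).isInfix)) ?_ ?_
    · rw [I.Q_eq, composable_append_right (I.B_ne_nil _)]
      exact (isPath_append.1 (hsplit ▸ hnz.1)).2.2
    · rwa [I.Q_eq (j + 1), ← append_assoc, ← hsplit]
  rw [I.Q_eq, suffix_append_self_iff] at hQ
  exact suffix_append_self_iff.2 hQ

theorem perfectPair_A_B_append_P {j : ℕ} (h : I.A (j + 1) ≠ []) :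
    M.PerfectPair (I.A (j + 1)) (I.B (j + 1) ++ P.s (j + 2)) := by
  refine ⟨h, by simp [I.B_ne_nil], (P.nonzero _).infix (I.P_eq (j + 1) ▸ prefix_append _ _).isInfix,
    I.nonzero_B_append_P (I.A_add_two_ne_nil h), ?_, ?_,
    fun u hu hnz hc hz => I.B_append_P_prefix_of_isZero h hu hnz hc hz,
    fun v hv hnz hc hz => I.A_suffix_of_isZero hv hnz hc hz⟩
  · rw [composable_append_right (I.B_ne_nil _)]
    exact (isPath_append.1 (I.P_eq (j + 1) ▸ (P.nonzero (j + 1)).1)).2.2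
  · rw [← append_assoc, ← I.P_eq]
    exact isZero_of_mem (P.append_mem _)

theorem perfectPair_B_append_P_A {j : ℕ} (h : I.A (j + 2) ≠ []) :
    M.PerfectPair (I.B j ++ P.s (j + 1)) (I.A (j + 2)) := by
  refine ⟨by simp [I.B_ne_nil], h, I.nonzero_B_append_P h,
    (P.nonzero _).infix (I.P_eq (j + 2) ▸ prefix_append _ _).isInfix, ?_, ?_,
    fun u hu hnz hc hz => I.A_prefix_of_isZero hu hnz hc hz,
    fun v hv hnz hc hz => I.B_append_P_suffix_of_isZero h hv hnz hc hz⟩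
  · rw [composable_append_left (P.ne_nil _), I.P_eq, composable_append_left (I.B_ne_nil _)]
    exact (isPath_append.1 (I.Q_eq (j + 1) ▸ (Q.nonzero (j + 1)).1)).2.2
  · rw [I.B_append_P_eq, append_assoc, ← I.Q_eq]
    exact isZero_of_mem (Q.append_mem j)

theorem isPerfect_A_zero (h : I.A 0 ≠ []) : M.IsPerfect (I.A 0) := by
  obtain ⟨hA, hB⟩ := I.periodic
  have hP : Function.Periodic P.s (P.n * Q.n) := P.periodic_mul_right Q.n
  obtain ⟨N, hN⟩ : ∃ N, P.n * Q.n = N + 1 :=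
    Nat.exists_eq_succ_of_ne_zero (Nat.mul_pos P.n_pos Q.n_pos).ne'
  have hshift (i : ℕ) :
      2 * (i + P.n * Q.n) + N + 1 = 2 * i + N + 1 + P.n * Q.n + P.n * Q.n := by ring
  have hne (i : ℕ) : I.A (2 * i + N + 1) ≠ [] := by
    induction i with
    | zero => rwa [mul_zero, zero_add, ← hN, hA.eq]
    | succ i ih =>
      rw [show 2 * (i + 1) + N + 1 = 2 * i + N + 1 + 2 by ring]
      exact I.A_add_two_ne_nil ih
  have key := isPerfect_of_alternating (f := fun i => I.A (2 * i + N + 1))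
    (g := fun i => I.B (2 * i + N + 1) ++ P.s (2 * i + N + 1 + 1)) (n := P.n * Q.n)
    (Nat.mul_pos P.n_pos Q.n_pos)
    (fun i => by
      dsimp only
      rw [hshift, hA, hA])
    (fun i => by
      dsimp only
      rw [hshift, hB, hB, add_right_comm _ (P.n * Q.n), add_right_comm _ (P.n * Q.n), hP, hP])
    (fun i => I.perfectPair_A_B_append_P (hne i))
    (fun i => by
      rw [show 2 * (i + 1) + N + 1 = 2 * i + N + 1 + 2 by ring]
      exact I.perfectPair_B_append_P_A (I.A_add_two_ne_nil (hne i)))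
  rwa [mul_zero, zero_add, ← hN, hA.eq] at key

end Interleaving

end MonomialData

/-- there is no overlap between any two co-elementary perfect
paths of a monomial algebra. -/
theorem no_overlap_coelementary {V E : Type} (M : MonomialData V E)
    (p q : List E) (hp : M.CoElementary p) (hq : M.CoElementary q) :
    ¬ M.Overlap p q := by
  rintro ⟨x, p', q', hx, rfl, rfl, hnz, hpq⟩
  rcases eq_or_ne p' [] with rfl | hp'
  · rcases eq_or_ne q' [] with rfl | hq'
    · exact (hpq (by simp)).1 rfl
    · exact hq.not_isPerfect_of_append hq' hp.1
  · obtain ⟨P, hP⟩ := hp.1.exists_perfectPathSeq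
    obtain ⟨Q, hQ⟩ := hq.1.exists_perfectPathSeq
    obtain ⟨I, hI⟩ := MonomialData.exists_interleaving hx hP hQ (hP ▸ hnz)
    exact hp.not_isPerfect_of_append hx (hI ▸ I.isPerfect_A_zero (hI ▸ hp'))
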